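/- For every nonnegative integer n, S_n^{(r,k)}(x|a_1,…,a_r) = Σ_{m=0}^n ( Σ_{l=m}^n S_2(l,m) C(n,l) S_{n−l}^{(r,k)}(−m|a_1,…,a_r) ) (x)^{(m)}, as an identity of polynomials in x, where (x)^{(m)} = x(x+1)⋯(x+m−1) is the rising factorial with (x)^{(0)} = 1. -/

import Mathlib

/-!
With `u = 1 - e^{-t}`, the expansion `e^{Nt} = (1 - u)^{-N} = ∑_m C(N+m-1, m) u^m` holds for every
natural `N`, hence `e^{xt} = ∑_m x^{(m)} u^m / m!` as a power series with polynomial coefficients.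
Multiplying by the generating function `G(t)` of the `S_n`, the `m`-th term becomes `x^{(m)}/m!`
times `G(t) e^{-mt} (e^t - 1)^m = (∑_l S_l(-m) t^l / l!) (e^t - 1)^m`, whose coefficients are the
inner Stirling sums. Since `G` is only given with its denominator cleared, the identity is proved
after multiplying by that nonzero denominator, which is then cancelled.
-/

open PowerSeries Finset

/-- The formal power series `e^{c·t}` over a commutative `ℚ`-algebra `R`. -/
noncomputable def expS {R : Type*} [CommRing R] [Algebra ℚ R] (c : R) : PowerSeries R :=
  PowerSeries.rescale c (PowerSeries.exp R)

/-- The formal power series `Li_k(1 - e^{-t})` over `ℂ`, where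
`Li_k(z) = ∑_{m ≥ 1} z^m / m^k` is the `k`-th polylogarithm.  Since `1 - e^{-t}`
has order `1`, the coefficient of `t^n` only involves the terms with `1 ≤ m ≤ n`. -/
noncomputable def Lik (k : ℤ) : PowerSeries ℂ :=
  PowerSeries.mk fun n => ∑ m ∈ Finset.Icc 1 n,
    ((m : ℂ) ^ k)⁻¹ * PowerSeries.coeff n ((1 - expS (-1 : ℂ)) ^ m)

/-- The exponential generating function `∑_n p n · t^n / n!` of a sequence of
complex polynomials. -/
noncomputable def egf (p : ℕ → Polynomial ℂ) : PowerSeries (Polynomial ℂ) :=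
  PowerSeries.mk fun n => ((n.factorial : ℂ))⁻¹ • p n

section ExpS

variable {R : Type*} [CommRing R] [Algebra ℚ R]

lemma coeff_expS (c : R) (n : ℕ) :
    coeff n (expS c) = algebraMap ℚ R (1 / n.factorial) * c ^ n := by
  simp [expS, coeff_rescale, coeff_exp, mul_comm]

lemma constantCoeff_expS (c : R) : constantCoeff (expS c) = 1 := by
  simp [← coeff_zero_eq_constantCoeff_apply, coeff_expS]

lemma expS_mul_expS (c d : R) : expS c * expS d = expS (c + d) :=
  exp_mul_exp_eq_exp_add c d

lemma expS_zero : expS (0 : R) = 1 := by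
  ext n
  cases n <;> simp [coeff_expS]

lemma expS_pow (c : R) (N : ℕ) : expS c ^ N = expS (N * c) := by
  induction N with
  | zero => simp [expS_zero]
  | succ N ih => rw [pow_succ, ih, expS_mul_expS]; push_cast; ring_nf

lemma map_expS {S : Type*} [CommRing S] [Algebra ℚ S] (f : R →+* S) (c : R) :
    map f (expS c) = expS (f c) := by
  ext n
  simp [coeff_expS]

lemma X_dvd_one_sub_expS (c : R) : X ∣ 1 - expS c :=
  X_dvd_iff.mpr (by simp [constantCoeff_expS])

lemma X_dvd_exp_sub_one : X ∣ exp R - 1 :=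
  X_dvd_iff.mpr (by simp)

lemma expS_sub_one_ne_zero {c : R} (hc : c ≠ 0) : expS c - 1 ≠ 0 := fun h => hc <| by
  simpa [coeff_expS] using congrArg (coeff 1) h

lemma exp_sub_one_pow_mul_expS_neg (m : ℕ) :
    (exp R - 1) ^ m * expS (-(m : R)) = (1 - expS (-1 : R)) ^ m := by
  have hexp : exp R = expS 1 := by rw [expS, rescale_one]; rfl
  rw [show -(m : R) = m * -1 by ring, ← expS_pow, ← mul_pow, hexp, sub_mul, expS_mul_expS,
    add_neg_cancel, expS_zero, one_mul]

end ExpS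

section LocallyFiniteSum

variable {R : Type*} [CommSemiring R]

/-- `∑ m, h m` for a family with `X ^ m ∣ h m`, which is finite in each coefficient; for other
families `coeff n` only counts the terms with `m ≤ n`. -/
noncomputable def locallyFiniteSum (h : ℕ → R⟦X⟧) : R⟦X⟧ :=
  mk fun n => ∑ m ∈ range (n + 1), coeff n (h m)

variable {h : ℕ → R⟦X⟧}

lemma coeff_locallyFiniteSum (hh : ∀ m, X ^ m ∣ h m) {n N : ℕ} (hN : n < N) :
    coeff n (locallyFiniteSum h) = ∑ m ∈ range N, coeff n (h m) := by
  rw [locallyFiniteSum, coeff_mk]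
  refine sum_subset (range_subset_range.mpr hN) fun m hmN hmn => ?_
  exact X_pow_dvd_iff.mp (hh m) n (by simpa using hmn)

lemma mul_locallyFiniteSum (hh : ∀ m, X ^ m ∣ h m) (B : R⟦X⟧) :
    B * locallyFiniteSum h = locallyFiniteSum fun m => B * h m := by
  ext n
  have hBh : ∀ m, X ^ m ∣ B * h m := fun m => (hh m).mul_left B
  rw [coeff_locallyFiniteSum hBh n.lt_succ_self, coeff_mul]
  simp only [coeff_mul]
  rw [sum_comm]
  refine sum_congr rfl fun p hp => ?_
  have hp2 : p.2 < n + 1 := Nat.lt_succ_of_le (HasAntidiagonal.antidiagonal.snd_le hp)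
  rw [coeff_locallyFiniteSum hh hp2, mul_sum]

lemma X_pow_dvd_C_mul_map {R S : Type*} [CommSemiring R] [CommSemiring S] (f : R →+* S) (s : S)
    {w : R⟦X⟧} {m : ℕ} (h : X ^ m ∣ w) : X ^ m ∣ PowerSeries.C s * map f w := by
  simpa using (map_dvd (map f) h).mul_left (PowerSeries.C s)

lemma subst_eq_locallyFiniteSum {R : Type*} [CommRing R] {u : R⟦X⟧} (hu : constantCoeff u = 0)
    (f : R⟦X⟧) : subst u f = locallyFiniteSum fun m => coeff m f • u ^ m := by
  have hpow : ∀ m, X ^ m ∣ u ^ m := fun m => pow_dvd_pow_of_dvd (X_dvd_iff.mpr hu) m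
  ext n
  rw [coeff_locallyFiniteSum (fun m => dvd_smul_of_dvd _ (hpow m)) n.lt_succ_self,
    coeff_subst' (HasSubst.of_constantCoeff_zero' hu)]
  simp only [coeff_smul]
  refine finsum_eq_sum_of_support_subset _ fun d hd => ?_
  by_contra hdn
  refine hd ?_
  simp only [X_pow_dvd_iff.mp (hpow d) n (by simpa using hdn), smul_zero]

end LocallyFiniteSum

lemma expS_natCast_succ {R : Type*} [CommRing R] [Algebra ℚ R] (N : ℕ) :
    expS ((N + 1 : ℕ) : R) =
      locallyFiniteSum fun m => ((N + m).choose N : R) • (1 - expS (-1 : R)) ^ m := by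
  have hu : constantCoeff (1 - expS (-1 : R)) = 0 := X_dvd_iff.mp (X_dvd_one_sub_expS _)
  set V : R⟦X⟧ := mk fun m => ((N + m).choose N : R)
  have hinv : expS (-1 : R) ^ (N + 1) * subst (1 - expS (-1 : R)) V = 1 := by
    have := congrArg (substAlgHom (HasSubst.of_constantCoeff_zero' hu))
      (mk_add_choose_mul_one_sub_pow_eq_one (S := R) (d := N))
    rwa [map_mul, map_pow, map_sub, map_one, substAlgHom_X, coe_substAlgHom, mul_comm,
      sub_sub_cancel] at this
  calc expS ((N + 1 : ℕ) : R)
      = expS ((N + 1 : ℕ) : R) * (expS (-1 : R) ^ (N + 1) * subst (1 - expS (-1 : R)) V) := by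
        rw [hinv, mul_one]
    _ = subst (1 - expS (-1 : R)) V := by
        rw [expS_pow, ← mul_assoc, expS_mul_expS, mul_neg_one, add_neg_cancel,
          expS_zero, one_mul]
    _ = _ := by simp [subst_eq_locallyFiniteSum hu, V]

noncomputable def multichoosePoly (K : Type*) [Field K] (m : ℕ) : Polynomial K :=
  Polynomial.C (m.factorial : K)⁻¹ * ∏ i ∈ range m, (Polynomial.X + Polynomial.C (i : K))

lemma expS_X_eq_locallyFiniteSum {K : Type*} [Field K] [CharZero K] :
    expS (Polynomial.X : Polynomial K) = locallyFiniteSum fun m =>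
      PowerSeries.C (multichoosePoly K m) * map Polynomial.C ((1 - expS (-1 : K)) ^ m) := by
  have hu := X_dvd_one_sub_expS (-1 : K)
  refine PowerSeries.ext fun n => ?_
  rw [coeff_locallyFiniteSum (fun m => X_pow_dvd_C_mul_map _ _ (pow_dvd_pow_of_dvd hu m))
    n.lt_succ_self]
  refine Polynomial.eq_of_infinite_eval_eq _ _ ((Set.infinite_range_of_injective
    (fun a b h => by simpa using h : Function.Injective fun N : ℕ => ((N + 1 : ℕ) : K))).mono ?_)
  rintro _ ⟨N, rfl⟩
  show Polynomial.eval _ _ = Polynomial.eval _ _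
  rw [← Polynomial.coe_evalRingHom, ← coeff_map, map_expS, Polynomial.coe_evalRingHom,
    Polynomial.eval_X, expS_natCast_succ,
    coeff_locallyFiniteSum (fun m => dvd_smul_of_dvd _ (pow_dvd_pow_of_dvd hu m)) n.lt_succ_self,
    Polynomial.eval_finsetSum]
  refine sum_congr rfl fun m _ => ?_
  have hasc : ∏ i ∈ range m, (((N + 1 : ℕ) : K) + i) = m.factorial * (N + m).choose N := by
    have h := Nat.ascFactorial_eq_factorial_mul_choose N m
    rw [Nat.ascFactorial_eq_prod_range, ← Nat.choose_symm_add] at h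
    exact_mod_cast h
  have hm : (m.factorial : K) ≠ 0 := Nat.cast_ne_zero.mpr m.factorial_ne_zero
  simp only [coeff_smul, coeff_C_mul, coeff_map, smul_eq_mul, multichoosePoly, Polynomial.eval_mul,
    Polynomial.eval_C, Polynomial.eval_prod, Polynomial.eval_add, Polynomial.eval_X]
  rw [hasc]
  field_simp

lemma mul_expS_eq_of_map_C {R : Type*} [CommRing R] [Algebra ℚ R] {L D : R⟦X⟧}
    {F : (Polynomial R)⟦X⟧} (h : map Polynomial.C L * expS Polynomial.X = map Polynomial.C D * F)
    (c : R) : L * expS c = D * map (Polynomial.evalRingHom c) F := by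
  have hC : ∀ G : R⟦X⟧, map (Polynomial.evalRingHom c) (map Polynomial.C G) = G := fun G => by
    ext; simp [coeff_map]
  simpa [map_expS, hC] using congrArg (map (Polynomial.evalRingHom c)) h

lemma stirling_eq_zero_of_lt {S2 : ℕ → ℕ → ℂ}
    (hS2 : ∀ m, (exp ℂ - 1) ^ m = (m.factorial : ℂ) • mk fun l => S2 l m / (l.factorial : ℂ))
    {l m : ℕ} (h : l < m) : S2 l m = 0 := by
  have h0 := X_pow_dvd_iff.mp (pow_dvd_pow_of_dvd (X_dvd_exp_sub_one (R := ℂ)) m) l h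
  simpa [hS2 m, Nat.factorial_ne_zero] using h0

lemma coeff_exp_sub_one_pow_mul {S2 : ℕ → ℕ → ℂ}
    (hS2 : ∀ m, (exp ℂ - 1) ^ m = (m.factorial : ℂ) • mk fun l => S2 l m / (l.factorial : ℂ))
    (e : ℕ → ℂ) (m n : ℕ) :
    coeff n ((exp ℂ - 1) ^ m * mk fun j => (j.factorial : ℂ)⁻¹ * e j)
      = m.factorial / n.factorial * ∑ l ∈ Icc m n, S2 l m * (n.choose l : ℂ) * e (n - l) := by
  rw [hS2 m, smul_mul_assoc, coeff_smul, coeff_mul, Nat.sum_antidiagonal_eq_sum_range_succ_mk,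
    smul_eq_mul, mul_sum, mul_sum]
  rw [← sum_subset (s₁ := Icc m n) (fun l hl => by simp at hl ⊢; omega)]
  · refine sum_congr rfl fun l hl => ?_
    have hln : l ≤ n := (mem_Icc.mp hl).2
    simp only [coeff_mk]
    rw [Nat.cast_choose ℂ hln]
    have hn : (n.factorial : ℂ) ≠ 0 := Nat.cast_ne_zero.mpr n.factorial_ne_zero
    field_simp
  · intro l hl hlIcc
    have hlm : l < m := by simp at hl hlIcc; omega
    simp [stirling_eq_zero_of_lt hS2 hlm]

noncomputable def stirlingExpansion (S : ℕ → Polynomial ℂ) (S2 : ℕ → ℕ → ℂ) (n : ℕ) :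
    Polynomial ℂ :=
  ∑ m ∈ Finset.range (n + 1),
    Polynomial.C (∑ l ∈ Finset.Icc m n,
        S2 l m * (n.choose l : ℂ) * (S (n - l)).eval (-(m : ℂ)))
      * ∏ i ∈ Finset.range m, (Polynomial.X + Polynomial.C (i : ℂ))

lemma map_evalRingHom_egf (S : ℕ → Polynomial ℂ) (c : ℂ) :
    map (Polynomial.evalRingHom c) (egf S) = mk fun j => (j.factorial : ℂ)⁻¹ * (S j).eval c := by
  ext j
  simp [egf, coeff_map]

lemma egf_stirlingExpansion {S : ℕ → Polynomial ℂ} {S2 : ℕ → ℕ → ℂ}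
    (hS2 : ∀ m, (exp ℂ - 1) ^ m = (m.factorial : ℂ) • mk fun l => S2 l m / (l.factorial : ℂ)) :
    egf (stirlingExpansion S S2) = locallyFiniteSum fun m =>
      PowerSeries.C (multichoosePoly ℂ m) *
        map Polynomial.C ((exp ℂ - 1) ^ m * map (Polynomial.evalRingHom (-(m : ℂ))) (egf S)) := by
  refine PowerSeries.ext fun n => ?_
  rw [coeff_locallyFiniteSum (fun m => X_pow_dvd_C_mul_map _ _
      ((pow_dvd_pow_of_dvd X_dvd_exp_sub_one m).mul_right _)) n.lt_succ_self,
    egf, coeff_mk, stirlingExpansion, smul_sum]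
  refine sum_congr rfl fun m _ => ?_
  rw [coeff_C_mul, coeff_map, map_evalRingHom_egf, coeff_exp_sub_one_pow_mul hS2,
    Polynomial.smul_eq_C_mul, multichoosePoly, mul_right_comm, ← Polynomial.C_mul,
    ← mul_assoc, ← Polynomial.C_mul]
  congr 2
  have hm : (m.factorial : ℂ) ≠ 0 := Nat.cast_ne_zero.mpr m.factorial_ne_zero
  field_simp

lemma egf_injective : Function.Injective egf := fun S T h => funext fun n => by
  have hn := congrArg (coeff n) h
  simp only [egf, coeff_mk] at hn
  exact smul_right_injective _ (inv_ne_zero (Nat.cast_ne_zero.mpr n.factorial_ne_zero)) hn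

lemma prod_expS_sub_one_mul_ne_zero {r : ℕ} {a : Fin r → ℂ} (ha : ∀ j, a j ≠ 0) :
    (∏ j, (expS (a j) - 1)) * (1 - expS (-1 : ℂ)) ≠ 0 := by
  refine mul_ne_zero (prod_ne_zero_iff.mpr fun j _ => expS_sub_one_ne_zero (ha j)) ?_
  rw [← neg_sub]
  exact neg_ne_zero.mpr (expS_sub_one_ne_zero (neg_ne_zero.mpr one_ne_zero))

theorem stmt10_general (r : ℕ) (k : ℤ) (a : Fin r → ℂ) (ha : ∀ j, a j ≠ 0)
    (S : ℕ → Polynomial ℂ) (S2 : ℕ → ℕ → ℂ)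
    -- `S n` is the mixed-type polynomial `S_n^{(r,k)}(x|a_1,…,a_r)`:
    (hS : (PowerSeries.X : PowerSeries (Polynomial ℂ)) ^ r
        * PowerSeries.map Polynomial.C (Lik k) * expS Polynomial.X
        = (∏ j, (expS (Polynomial.C (a j)) - 1)) * (1 - expS (-1 : Polynomial ℂ)) * egf S)
    -- `S2 l m` is the Stirling number of the second kind, defined by
    -- `(e^t - 1)^m = m! ∑_{l ≥ m} S2(l,m) t^l / l!`:
    (hS2 : ∀ m, (PowerSeries.exp ℂ - 1) ^ m
        = (m.factorial : ℂ) • PowerSeries.mk (fun l => S2 l m / (l.factorial : ℂ)))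
    (n : ℕ) :
    S n = ∑ m ∈ Finset.range (n + 1),
      Polynomial.C (∑ l ∈ Finset.Icc m n,
          S2 l m * (n.choose l : ℂ) * (S (n - l)).eval (-(m : ℂ)))
        * ∏ i ∈ Finset.range m, (Polynomial.X + Polynomial.C (i : ℂ)) := by
  set L : ℂ⟦X⟧ := X ^ r * Lik k
  set D : ℂ⟦X⟧ := (∏ j, (expS (a j) - 1)) * (1 - expS (-1 : ℂ))
  have hLD : map Polynomial.C L * expS Polynomial.X = map Polynomial.C D * egf S := by
    simpa [L, D, map_expS] using hS
  have hterm : ∀ m : ℕ, D * ((exp ℂ - 1) ^ m * map (Polynomial.evalRingHom (-(m : ℂ))) (egf S))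
      = L * (1 - expS (-1 : ℂ)) ^ m := fun m => by
    rw [mul_left_comm, ← mul_expS_eq_of_map_C hLD, mul_left_comm, exp_sub_one_pow_mul_expS_neg]
  have key : map Polynomial.C D * egf (stirlingExpansion S S2) = map Polynomial.C D * egf S := by
    rw [egf_stirlingExpansion hS2, mul_locallyFiniteSum, ← hLD, expS_X_eq_locallyFiniteSum,
      mul_locallyFiniteSum]
    · refine congrArg locallyFiniteSum (funext fun m => ?_)
      rw [mul_left_comm, ← map_mul, hterm, map_mul, mul_left_comm]
    · exact fun m => X_pow_dvd_C_mul_map _ _ (pow_dvd_pow_of_dvd (X_dvd_one_sub_expS _) m)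
    · exact fun m => X_pow_dvd_C_mul_map _ _ ((pow_dvd_pow_of_dvd X_dvd_exp_sub_one m).mul_right _)
  have hD : map Polynomial.C D ≠ 0 := (map_ne_zero_iff _
    (map_injective _ Polynomial.C_injective)).mpr (prod_expS_sub_one_mul_ne_zero ha)
  exact (congrFun (egf_injective (mul_left_cancel₀ hD key)) n).symm

theorem stmt10 (r : ℕ) (hr : 0 < r) (k : ℤ) (a : Fin r → ℂ) (ha : ∀ j, a j ≠ 0)
    (S : ℕ → Polynomial ℂ) (S2 : ℕ → ℕ → ℂ)
    -- `S n` is the mixed-type polynomial `S_n^{(r,k)}(x|a_1,…,a_r)`: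
    (hS : (PowerSeries.X : PowerSeries (Polynomial ℂ)) ^ r
        * PowerSeries.map Polynomial.C (Lik k) * expS Polynomial.X
        = (∏ j, (expS (Polynomial.C (a j)) - 1)) * (1 - expS (-1 : Polynomial ℂ)) * egf S)
    -- `S2 l m` is the Stirling number of the second kind, defined by
    -- `(e^t - 1)^m = m! ∑_{l ≥ m} S2(l,m) t^l / l!`:
    (hS2 : ∀ m, (PowerSeries.exp ℂ - 1) ^ m
        = (m.factorial : ℂ) • PowerSeries.mk (fun l => S2 l m / (l.factorial : ℂ)))
    (n : ℕ) :
    S n = ∑ m ∈ Finset.range (n + 1),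
      Polynomial.C (∑ l ∈ Finset.Icc m n,
          S2 l m * (n.choose l : ℂ) * (S (n - l)).eval (-(m : ℂ)))
        * ∏ i ∈ Finset.range m, (Polynomial.X + Polynomial.C (i : ℂ)) :=
  stmt10_general r k a ha S S2 hS hS2 n
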